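/- Let x ≥ 0, let n⃗ = (n_0,…,n_x) be positive integers, let T⃗_x be a system of trees that is (2n_0−1,…,2n_x−1)-good from a tuple of strings σ⃗_x, and let P be a set of elements of T⃗_x. Then there is a system of trees, each of whose elements is an element of T⃗_x, which is n⃗-good from σ⃗_x for P, or there is such a system which is n⃗-good from σ⃗_x for the complement of P. -/

import Mathlib

/-! For a single tree `T` that is `(2n-1)`-good from `σ` and a colouring `Q` of its strings,
induct on the height of `T`: if `σ ∈ T` then `{σ}` works; otherwise `σ` has at least `2n-1`
immediate successors, the part of `T` above each of them contains a monochromatic `n`-good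
subtree, and by pigeonhole `n` of these share a colour, so their union is the required tree.

For a system, induct on its length: above each `ρ ∈ T_0` the induction hypothesis gives a
subsystem of the tail system that is good for `P` or for `Pᶜ` (sections at `ρ`). Colouring `ρ`
by which alternative holds and applying the single-tree case to `T_0` yields a first tree all of
whose strings have the same colour, and the corresponding tails complete the system. -/

/-- A *tree*: a finite set of pairwise incomparable strings (antichain under
the prefix/extension order), where a string is a finite sequence of naturals. -/
def IsTree (T : Finset (List ℕ)) : Prop :=
  ∀ σ ∈ T, ∀ τ ∈ T, σ <+: τ → σ = τ

/-- `T` is `a`-good from `σ`: `T` is nonempty, every string in `T` extends `σ`,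
and for every `τ` with `σ ⊆ τ ⊊ ρ` for some `ρ ∈ T`, at least `a` immediate
successors `τ*k` of `τ` are initial segments of elements of `T`. -/
def GoodFrom (a : ℕ) (T : Finset (List ℕ)) (σ : List ℕ) : Prop :=
  T.Nonempty ∧ (∀ ρ ∈ T, σ <+: ρ) ∧
    ∀ τ : List ℕ, (∃ ρ ∈ T, σ <+: τ ∧ τ <+: ρ ∧ τ ≠ ρ) →
      a ≤ {k : ℕ | ∃ ρ ∈ T, τ ++ [k] <+: ρ}.ncard

/-- `T` is `a`-good from `σ` for `P`: in addition `T ⊆ P`. -/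
def GoodFromFor (a : ℕ) (T : Finset (List ℕ)) (σ : List ℕ) (P : Set (List ℕ)) : Prop :=
  GoodFrom a T σ ∧ ↑T ⊆ P

/-- A *system of trees* `T⃗ = (T_0, …, T_x)`: a tree `T_0` together with,
recursively, for each tuple `(σ_0, …, σ_{k-1})`, a tree `T_k(σ_0, …, σ_{k-1})`;
formally, the tree at level `k` is a function of the strings at the levels `< k`. -/
def TreeSystem (x : ℕ) : Type :=
  (k : Fin (x + 1)) → ((j : Fin (k : ℕ)) → List ℕ) → Finset (List ℕ)

/-- Restriction of a tuple of strings to the coordinates below `k`. -/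
def restrictBelow {x : ℕ} (k : Fin (x + 1)) (β : Fin (x + 1) → List ℕ) :
    (j : Fin (k : ℕ)) → List ℕ :=
  fun j => β ⟨j, j.isLt.trans k.isLt⟩

/-- Every level of the system is a tree (finite antichain). -/
def IsTreeSystem {x : ℕ} (T : TreeSystem x) : Prop :=
  ∀ k ρ, IsTree (T k ρ)

/-- `β` is an element of the subsystem `(T_0, …, T_{K-1})`:
`β k ∈ T_k(β_0, …, β_{k-1})` for all `k < K`. -/
def SysMemUpTo {x : ℕ} (T : TreeSystem x) (K : Fin (x + 1))
    (β : Fin (x + 1) → List ℕ) : Prop :=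
  ∀ k, k < K → β k ∈ T k (restrictBelow k β)

/-- `β` is an element of the system `T⃗`: `β k ∈ T_k(β_0, …, β_{k-1})` for all `k`. -/
def SysElem {x : ℕ} (T : TreeSystem x) (β : Fin (x + 1) → List ℕ) : Prop :=
  ∀ k, β k ∈ T k (restrictBelow k β)

/-- The subsystem `(T_0, …, T_{K-1})` is `(n_0, …, n_{K-1})`-good from `σ⃗`. -/
def SysGoodBelow {x : ℕ} (n : Fin (x + 1) → ℕ) (T : TreeSystem x)
    (σ : Fin (x + 1) → List ℕ) (K : Fin (x + 1)) : Prop :=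
  ∀ k, k < K → ∀ β, SysMemUpTo T k β →
    GoodFrom (n k) (T k (restrictBelow k β)) (σ k)

/-- The system `T⃗` is `n⃗`-good from `σ⃗`: for each `k` and each element
`β⃗_{k-1}` of the subsystem `(T_0, …, T_{k-1})`, the tree `T_k(β⃗_{k-1})`
is `n_k`-good from `σ_k`. -/
def SysGoodFrom {x : ℕ} (n : Fin (x + 1) → ℕ) (T : TreeSystem x)
    (σ : Fin (x + 1) → List ℕ) : Prop :=
  ∀ k β, SysMemUpTo T k β → GoodFrom (n k) (T k (restrictBelow k β)) (σ k)

/-- The system `T⃗` is `n⃗`-good from `σ⃗` for `P`: in addition every element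
of the system belongs to `P`. -/
def SysGoodFromFor {x : ℕ} (n : Fin (x + 1) → ℕ) (T : TreeSystem x)
    (σ : Fin (x + 1) → List ℕ) (P : Set (Fin (x + 1) → List ℕ)) : Prop :=
  SysGoodFrom n T σ ∧ ∀ β, SysElem T β → β ∈ P

/-- `ξ⃗` componentwise extends `β⃗`. -/
def TupleExtends {x : ℕ} (β ξ : Fin (x + 1) → List ℕ) : Prop :=
  ∀ k, β k <+: ξ k

/-- A set of tuples of strings is *open* if it is closed under componentwise
extension. -/
def IsOpenTupleSet {x : ℕ} (P : Set (Fin (x + 1) → List ℕ)) : Prop :=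
  ∀ β ∈ P, ∀ ξ, TupleExtends β ξ → ξ ∈ P

def immediateSuccessors (T : Finset (List ℕ)) (τ : List ℕ) : Set ℕ :=
  {k | ∃ ρ ∈ T, τ ++ [k] <+: ρ}

theorem immediateSuccessors_finite (T : Finset (List ℕ)) (τ : List ℕ) :
    (immediateSuccessors T τ).Finite :=
  (T.finite_toSet.biUnion fun ρ _ => ρ.finite_toSet).subset fun k ⟨ρ, hρ, hk⟩ =>
    Set.mem_biUnion hρ (hk.subset (by simp))

theorem immediateSuccessors_mono {T T' : Finset (List ℕ)} (h : T ⊆ T') (τ : List ℕ) :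
    immediateSuccessors T τ ⊆ immediateSuccessors T' τ :=
  fun _ ⟨ρ, hρ, hk⟩ => ⟨ρ, h hρ, hk⟩

theorem append_singleton_prefix_of_prefix {σ τ ρ : List ℕ} {k : ℕ} (hστ : σ <+: τ) (hne : σ ≠ τ)
    (hτρ : τ <+: ρ) (hkρ : σ ++ [k] <+: ρ) : σ ++ [k] <+: τ := by
  refine List.prefix_of_prefix_length_le hkρ hτρ ?_
  have : σ.length ≠ τ.length := fun h => hne (hστ.eq_of_length h)
  have := hστ.length_le
  simp only [List.length_append, List.length_singleton]
  omega

theorem goodFrom_singleton (a : ℕ) (σ : List ℕ) : GoodFrom a {σ} σ := by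
  refine ⟨Finset.singleton_nonempty σ, by simp, ?_⟩
  rintro τ ⟨ρ, hρ, hστ, hτρ, hne⟩
  rw [Finset.mem_singleton] at hρ
  subst hρ
  exact absurd (hτρ.eq_of_length_le hστ.length_le) hne

theorem GoodFrom.filter_prefix {a : ℕ} {T : Finset (List ℕ)} {σ : List ℕ} (hT : GoodFrom a T σ)
    {k : ℕ} (hk : k ∈ immediateSuccessors T σ) :
    GoodFrom a (T.filter (σ ++ [k] <+: ·)) (σ ++ [k]) := by
  obtain ⟨ρ, hρ, hkρ⟩ := hk
  refine ⟨⟨ρ, Finset.mem_filter.2 ⟨hρ, hkρ⟩⟩, fun ρ' hρ' => (Finset.mem_filter.1 hρ').2, ?_⟩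
  rintro τ ⟨ρ', hρ', hkτ, hτρ', hne⟩
  have hsucc : immediateSuccessors T τ ⊆ immediateSuccessors (T.filter (σ ++ [k] <+: ·)) τ :=
    fun j ⟨ρ'', hρ'', hj⟩ =>
      ⟨ρ'', Finset.mem_filter.2 ⟨hρ'', hkτ.trans ((List.prefix_append τ [j]).trans hj)⟩, hj⟩
  calc a ≤ (immediateSuccessors T τ).ncard :=
        hT.2.2 τ ⟨ρ', (Finset.mem_filter.1 hρ').1, (List.prefix_append σ [k]).trans hkτ, hτρ', hne⟩
    _ ≤ _ := Set.ncard_le_ncard hsucc (immediateSuccessors_finite _ τ)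

theorem GoodFrom.biUnion {a : ℕ} {σ : List ℕ} {F : Finset ℕ} {S : ℕ → Finset (List ℕ)}
    (hF : F.Nonempty) (haF : a ≤ F.card) (hS : ∀ k ∈ F, GoodFrom a (S k) (σ ++ [k])) :
    GoodFrom a (F.biUnion S) σ := by
  refine ⟨?_, ?_, ?_⟩
  · obtain ⟨k, hk⟩ := hF
    obtain ⟨ρ, hρ⟩ := (hS k hk).1
    exact ⟨ρ, Finset.mem_biUnion.2 ⟨k, hk, hρ⟩⟩
  · intro ρ hρ
    obtain ⟨k, hk, hρ⟩ := Finset.mem_biUnion.1 hρ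
    exact (List.prefix_append σ [k]).trans ((hS k hk).2.1 ρ hρ)
  · rintro τ ⟨ρ, hρ, hστ, hτρ, hne⟩
    obtain ⟨k, hk, hρk⟩ := Finset.mem_biUnion.1 hρ
    by_cases hτσ : σ = τ
    · subst hτσ
      have hFsucc : ↑F ⊆ immediateSuccessors (F.biUnion S) σ := fun j hj => by
        obtain ⟨ρ', hρ'⟩ := (hS j hj).1
        exact ⟨ρ', Finset.mem_biUnion.2 ⟨j, hj, hρ'⟩, (hS j hj).2.1 ρ' hρ'⟩
      calc a ≤ F.card := haF
        _ = (↑F : Set ℕ).ncard := (Set.ncard_coe_finset F).symm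
        _ ≤ _ := Set.ncard_le_ncard hFsucc (immediateSuccessors_finite _ σ)
    · have hkτ := append_singleton_prefix_of_prefix hστ hτσ hτρ ((hS k hk).2.1 ρ hρk)
      calc a ≤ (immediateSuccessors (S k) τ).ncard := (hS k hk).2.2 τ ⟨ρ, hρk, hkτ, hτρ, hne⟩
        _ ≤ _ := Set.ncard_le_ncard (immediateSuccessors_mono (Finset.subset_biUnion_of_mem S hk) τ)
            (immediateSuccessors_finite _ τ)

theorem GoodFromFor.biUnion {a : ℕ} {σ : List ℕ} {Q : Set (List ℕ)} {F : Finset ℕ}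
    {S : ℕ → Finset (List ℕ)} (hF : F.Nonempty) (haF : a ≤ F.card)
    (hS : ∀ k ∈ F, GoodFromFor a (S k) (σ ++ [k]) Q) : GoodFromFor a (F.biUnion S) σ Q := by
  refine ⟨GoodFrom.biUnion hF haF fun k hk => (hS k hk).1, ?_⟩
  intro ρ hρ
  obtain ⟨k, hk, hρ⟩ := Finset.mem_biUnion.1 (Finset.mem_coe.1 hρ)
  exact (hS k hk).2 hρ

theorem Finset.exists_subset_two_mul_card_ge_forall_or_forall_not {α : Type*} (K : Finset α)
    (p : α → Prop) [DecidablePred p] :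
    ∃ F ⊆ K, K.card ≤ 2 * F.card ∧ ((∀ k ∈ F, p k) ∨ ∀ k ∈ F, ¬ p k) := by
  have hsplit := K.card_filter_add_card_filter_not p
  by_cases h : K.card ≤ 2 * (K.filter p).card
  · exact ⟨K.filter p, K.filter_subset p, h, .inl fun k hk => (Finset.mem_filter.1 hk).2⟩
  · exact ⟨K.filter (¬ p ·), K.filter_subset _, by omega,
      .inr fun k hk => (Finset.mem_filter.1 hk).2⟩

section Monochromatic

variable {n : ℕ} {Q : Set (List ℕ)}

theorem exists_singleton_goodFromFor_or_compl {T : Finset (List ℕ)} {σ : List ℕ} (hσ : σ ∈ T) :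
    ∃ S ⊆ T, GoodFromFor n S σ Q ∨ GoodFromFor n S σ Qᶜ := by
  refine ⟨{σ}, Finset.singleton_subset_iff.2 hσ, ?_⟩
  by_cases hσQ : σ ∈ Q
  · exact .inl ⟨goodFrom_singleton n σ, by simpa using hσQ⟩
  · exact .inr ⟨goodFrom_singleton n σ, by simpa using hσQ⟩

-- Pigeonhole: at least `n` of the `≥ 2n - 1` branches above `σ` carry subtrees of the same colour.
theorem GoodFrom.exists_goodFromFor_or_compl_of_branches {T : Finset (List ℕ)} {σ : List ℕ}
    (hT : GoodFrom (2 * n - 1) T σ) (hσ : σ ∉ T)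
    (hbranch : ∀ k ∈ immediateSuccessors T σ, ∃ S ⊆ T, GoodFromFor n S (σ ++ [k]) Q ∨
      GoodFromFor n S (σ ++ [k]) Qᶜ) :
    ∃ S ⊆ T, GoodFromFor n S σ Q ∨ GoodFromFor n S σ Qᶜ := by
  classical
  choose! S hST hS using hbranch
  set K := (immediateSuccessors_finite T σ).toFinset
  obtain ⟨ρ, hρ⟩ := hT.1
  have hσρ : σ ≠ ρ := fun h => hσ (h ▸ hρ)
  have hKcard : 2 * n - 1 ≤ K.card := by
    rw [← Set.ncard_eq_toFinset_card _ (immediateSuccessors_finite T σ)]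
    exact hT.2.2 σ ⟨ρ, hρ, List.prefix_refl σ, hT.2.1 ρ hρ, hσρ⟩
  have hKne : K.Nonempty := by
    obtain ⟨r, hr⟩ := hT.2.1 ρ hρ
    obtain _ | ⟨k, r⟩ := r
    · exact absurd (by simpa using hr) hσρ
    · exact ⟨k, (Set.Finite.mem_toFinset _).2 ⟨ρ, hρ, r, by simpa using hr⟩⟩
  obtain ⟨F, hFK, hFcard, hFcol⟩ :=
    K.exists_subset_two_mul_card_ge_forall_or_forall_not (fun k => GoodFromFor n (S k) (σ ++ [k]) Q)
  have hF : F.Nonempty ∧ n ≤ F.card := by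
    have := hKne.card_pos
    exact ⟨Finset.card_pos.1 (by omega), by omega⟩
  have hmem : ∀ k ∈ F, k ∈ immediateSuccessors T σ :=
    fun k hk => (Set.Finite.mem_toFinset _).1 (hFK hk)
  refine ⟨F.biUnion S, Finset.biUnion_subset.2 fun k hk => hST k (hmem k hk), ?_⟩
  rcases hFcol with hQ | hQc
  · exact .inl (GoodFromFor.biUnion hF.1 hF.2 hQ)
  · exact .inr (GoodFromFor.biUnion hF.1 hF.2 fun k hk =>
      (hS k (hmem k hk)).resolve_left (hQc k hk))

theorem exists_goodFromFor_or_compl_of_length_le (h : ℕ) :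
    ∀ {T : Finset (List ℕ)} {σ : List ℕ}, (∀ ρ ∈ T, ρ.length ≤ σ.length + h) →
      GoodFrom (2 * n - 1) T σ → ∃ S ⊆ T, GoodFromFor n S σ Q ∨ GoodFromFor n S σ Qᶜ := by
  induction h with
  | zero =>
    intro T σ hlen hT
    obtain ⟨ρ, hρ⟩ := hT.1
    have hσρ : σ = ρ := (hT.2.1 ρ hρ).eq_of_length_le (hlen ρ hρ)
    exact exists_singleton_goodFromFor_or_compl (hσρ ▸ hρ)
  | succ h ih =>
    intro T σ hlen hT
    by_cases hσ : σ ∈ T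
    · exact exists_singleton_goodFromFor_or_compl hσ
    refine hT.exists_goodFromFor_or_compl_of_branches hσ fun k hk => ?_
    have hlen' : ∀ ρ ∈ T.filter (σ ++ [k] <+: ·), ρ.length ≤ (σ ++ [k]).length + h := by
      intro ρ hρ
      have := hlen ρ (Finset.mem_filter.1 hρ).1
      simp only [List.length_append, List.length_singleton]
      omega
    obtain ⟨S, hS, hSQ⟩ := ih hlen' (hT.filter_prefix hk)
    exact ⟨S, hS.trans (Finset.filter_subset _ T), hSQ⟩

theorem GoodFrom.exists_goodFromFor_or_compl {T : Finset (List ℕ)} {σ : List ℕ}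
    (hT : GoodFrom (2 * n - 1) T σ) (Q : Set (List ℕ)) :
    ∃ S ⊆ T, GoodFromFor n S σ Q ∨ GoodFromFor n S σ Qᶜ :=
  exists_goodFromFor_or_compl_of_length_le (T.sup List.length)
    (fun _ hρ => (Finset.le_sup hρ).trans (Nat.le_add_left _ _)) hT

end Monochromatic

namespace TreeSystem

variable {x : ℕ}

def head (T : TreeSystem x) : Finset (List ℕ) :=
  T 0 Fin.elim0

def tail (T : TreeSystem (x + 1)) (ρ : List ℕ) : TreeSystem x :=
  fun k κ => T k.succ (Fin.cons ρ κ)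

def cons (S₀ : Finset (List ℕ)) (S : List ℕ → TreeSystem x) : TreeSystem (x + 1) :=
  Fin.cases (fun _ => S₀) fun k (κ : Fin (k + 1) → List ℕ) => S (κ 0) k (Fin.tail κ)

theorem apply_zero (T : TreeSystem x) (κ : Fin (0 : Fin (x + 1)) → List ℕ) : T 0 κ = T.head :=
  congrArg (T 0) (funext fun j => Fin.elim0 j)

theorem apply_eq_head (T : TreeSystem 0) (k : Fin 1) (κ : Fin k → List ℕ) : T k κ = T.head := by
  obtain rfl := Fin.fin_one_eq_zero k
  exact T.apply_zero κ

theorem cons_subset {T : TreeSystem (x + 1)} {S₀ : Finset (List ℕ)} {S : List ℕ → TreeSystem x}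
    (h₀ : S₀ ⊆ T.head) (h : ∀ ρ k κ, S ρ k κ ⊆ T.tail ρ k κ) (k : Fin (x + 2))
    (κ : Fin k → List ℕ) : cons S₀ S k κ ⊆ T k κ := by
  induction k using Fin.cases with
  | zero => exact (T.apply_zero κ).symm ▸ h₀
  | succ k =>
    exact Fin.consCases
      (motive := fun κ : Fin (k + 1) → List ℕ => cons S₀ S k.succ κ ⊆ T k.succ κ)
      (fun ρ γ => h ρ k γ) κ

end TreeSystem

open TreeSystem

theorem restrictBelow_succ_cons {x : ℕ} (ρ : List ℕ) (γ : Fin (x + 1) → List ℕ)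
    (k : Fin (x + 1)) :
    restrictBelow k.succ (Fin.cons ρ γ : Fin (x + 2) → List ℕ) =
      Fin.cons ρ (restrictBelow k γ) := by
  funext j
  induction j using Fin.cases <;> rfl

theorem apply_succ_restrictBelow_cons {x : ℕ} (T : TreeSystem (x + 1)) (ρ : List ℕ)
    (γ : Fin (x + 1) → List ℕ) (k : Fin (x + 1)) :
    T k.succ (restrictBelow k.succ (Fin.cons ρ γ)) = T.tail ρ k (restrictBelow k γ) := by
  rw [restrictBelow_succ_cons]; rfl

theorem forall_sysMemUpTo_zero_goodFrom_iff {x a : ℕ} {T : TreeSystem x} {s : List ℕ} :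
    (∀ β, SysMemUpTo T 0 β → GoodFrom a (T 0 (restrictBelow 0 β)) s) ↔ GoodFrom a T.head s := by
  simp only [apply_zero]
  exact ⟨fun h => h (fun _ => []) fun j hj => absurd hj (Fin.not_lt_zero j), fun h _ _ => h⟩

theorem sysGoodFrom_zero_iff {n : Fin 1 → ℕ} {T : TreeSystem 0} {σ : Fin 1 → List ℕ} :
    SysGoodFrom n T σ ↔ GoodFrom (n 0) T.head (σ 0) := by
  rw [SysGoodFrom, Fin.forall_fin_one]
  exact forall_sysMemUpTo_zero_goodFrom_iff

theorem sysElem_zero_iff {T : TreeSystem 0} {β : Fin 1 → List ℕ} : SysElem T β ↔ β 0 ∈ T.head := by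
  rw [SysElem, Fin.forall_fin_one]
  simp only [apply_zero]

theorem sysMemUpTo_succ_cons_iff {x : ℕ} {T : TreeSystem (x + 1)} {ρ : List ℕ}
    {γ : Fin (x + 1) → List ℕ} {k : Fin (x + 1)} :
    SysMemUpTo T k.succ (Fin.cons ρ γ) ↔ ρ ∈ T.head ∧ SysMemUpTo (T.tail ρ) k γ := by
  rw [SysMemUpTo, Fin.forall_fin_succ]
  simp only [Fin.succ_lt_succ_iff, Fin.succ_pos, true_imp_iff, Fin.cons_zero, Fin.cons_succ,
    apply_succ_restrictBelow_cons, apply_zero]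
  rfl

theorem sysElem_cons_iff {x : ℕ} {T : TreeSystem (x + 1)} {ρ : List ℕ}
    {γ : Fin (x + 1) → List ℕ} :
    SysElem T (Fin.cons ρ γ) ↔ ρ ∈ T.head ∧ SysElem (T.tail ρ) γ := by
  rw [SysElem, Fin.forall_fin_succ]
  simp only [Fin.cons_zero, Fin.cons_succ, apply_succ_restrictBelow_cons, apply_zero]
  rfl

theorem sysGoodFrom_succ_iff {x : ℕ} {n : Fin (x + 2) → ℕ} {T : TreeSystem (x + 1)}
    {σ : Fin (x + 2) → List ℕ} :
    SysGoodFrom n T σ ↔ GoodFrom (n 0) T.head (σ 0) ∧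
      ∀ ρ ∈ T.head, SysGoodFrom (Fin.tail n) (T.tail ρ) (Fin.tail σ) := by
  rw [SysGoodFrom, Fin.forall_fin_succ]
  simp only [forall_sysMemUpTo_zero_goodFrom_iff]
  refine and_congr_right fun _ => ?_
  refine ⟨fun h ρ hρ k γ hγ => ?_, fun h k β => ?_⟩
  · have := h k (Fin.cons ρ γ) (sysMemUpTo_succ_cons_iff.2 ⟨hρ, hγ⟩)
    simp only [apply_succ_restrictBelow_cons] at this
    exact this
  · induction β using Fin.consCases with
    | cons ρ γ =>
      intro hργ
      obtain ⟨hρ, hγ⟩ := sysMemUpTo_succ_cons_iff.1 hργ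
      simp only [apply_succ_restrictBelow_cons]
      exact h ρ hρ k γ hγ

theorem sysGoodFromFor_succ_iff {x : ℕ} {n : Fin (x + 2) → ℕ} {T : TreeSystem (x + 1)}
    {σ : Fin (x + 2) → List ℕ} {P : Set (Fin (x + 2) → List ℕ)} :
    SysGoodFromFor n T σ P ↔ GoodFrom (n 0) T.head (σ 0) ∧
      ∀ ρ ∈ T.head, SysGoodFromFor (Fin.tail n) (T.tail ρ) (Fin.tail σ) {γ | Fin.cons ρ γ ∈ P} := by
  rw [SysGoodFromFor, sysGoodFrom_succ_iff]
  constructor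
  · rintro ⟨⟨hhead, htail⟩, hP⟩
    exact ⟨hhead, fun ρ hρ => ⟨htail ρ hρ, fun γ hγ => hP _ (sysElem_cons_iff.2 ⟨hρ, hγ⟩)⟩⟩
  · rintro ⟨hhead, htail⟩
    refine ⟨⟨hhead, fun ρ hρ => (htail ρ hρ).1⟩, fun β => ?_⟩
    induction β using Fin.consCases with
    | cons ρ γ =>
      intro hργ
      obtain ⟨hρ, hγ⟩ := sysElem_cons_iff.1 hργ
      exact (htail ρ hρ).2 γ hγ

theorem sysGoodFromFor_zero_iff {n : Fin 1 → ℕ} {T : TreeSystem 0} {σ : Fin 1 → List ℕ}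
    {P : Set (Fin 1 → List ℕ)} :
    SysGoodFromFor n T σ P ↔ GoodFromFor (n 0) T.head (σ 0) {ρ | (fun _ => ρ) ∈ P} := by
  rw [SysGoodFromFor, sysGoodFrom_zero_iff, GoodFromFor]
  refine and_congr_right fun _ => ⟨fun h ρ hρ => h _ (sysElem_zero_iff.2 hρ), fun h β hβ => ?_⟩
  have hβ' : (fun _ => β 0) ∈ P := h (sysElem_zero_iff.1 hβ)
  rwa [show (fun _ => β 0) = β from funext fun k => congrArg β (Fin.fin_one_eq_zero k).symm] at hβ'

theorem exists_subsystem_sysGoodFromFor_or_compl (x : ℕ) :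
    ∀ {n : Fin (x + 1) → ℕ} {T : TreeSystem x} {σ : Fin (x + 1) → List ℕ},
      SysGoodFrom (fun i => 2 * n i - 1) T σ → ∀ P : Set (Fin (x + 1) → List ℕ),
      ∃ S : TreeSystem x, (∀ k κ, S k κ ⊆ T k κ) ∧
        (SysGoodFromFor n S σ P ∨ SysGoodFromFor n S σ Pᶜ) := by
  induction x with
  | zero =>
    intro n T σ hgood P
    obtain ⟨S₀, hS₀, hS₀P⟩ :=
      (sysGoodFrom_zero_iff.1 hgood).exists_goodFromFor_or_compl {ρ | (fun _ => ρ) ∈ P}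
    refine ⟨fun _ _ => S₀, fun k κ => T.apply_eq_head k κ ▸ hS₀, ?_⟩
    exact hS₀P.imp sysGoodFromFor_zero_iff.2 sysGoodFromFor_zero_iff.2
  | succ x ih =>
    intro n T σ hgood P
    obtain ⟨hhead, htail⟩ := sysGoodFrom_succ_iff.1 hgood
    have hsub : ∀ ρ, ∃ S : TreeSystem x, (∀ k κ, S k κ ⊆ T.tail ρ k κ) ∧ (ρ ∈ T.head →
        SysGoodFromFor (Fin.tail n) S (Fin.tail σ) {γ | Fin.cons ρ γ ∈ P} ∨
        SysGoodFromFor (Fin.tail n) S (Fin.tail σ) {γ | Fin.cons ρ γ ∈ P}ᶜ) := by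
      intro ρ
      by_cases hρ : ρ ∈ T.head
      · obtain ⟨S, hST, hS⟩ := ih (htail ρ hρ) {γ | Fin.cons ρ γ ∈ P}
        exact ⟨S, hST, fun _ => hS⟩
      · exact ⟨T.tail ρ, fun _ _ => subset_rfl, fun h => absurd h hρ⟩
    choose S hST hS using hsub
    obtain ⟨S₀, hS₀, hS₀Q⟩ := hhead.exists_goodFromFor_or_compl
      {ρ | SysGoodFromFor (Fin.tail n) (S ρ) (Fin.tail σ) {γ | Fin.cons ρ γ ∈ P}}
    refine ⟨cons S₀ S, cons_subset hS₀ hST, ?_⟩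
    rcases hS₀Q with ⟨hgood₀, hQ⟩ | ⟨hgood₀, hQc⟩
    · exact .inl (sysGoodFromFor_succ_iff.2 ⟨hgood₀, fun ρ hρ => hQ hρ⟩)
    · exact .inr (sysGoodFromFor_succ_iff.2 ⟨hgood₀, fun ρ hρ =>
        (hS ρ (hS₀ hρ)).resolve_left (hQc hρ)⟩)

theorem sys_good_subset_or_complement_general (x : ℕ) (n : Fin (x + 1) → ℕ)
    (T : TreeSystem x) (hT : IsTreeSystem T) (σ : Fin (x + 1) → List ℕ)
    (hgood : SysGoodFrom (fun i => 2 * n i - 1) T σ)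
    (P : Set (Fin (x + 1) → List ℕ)) :
    ∃ S : TreeSystem x, IsTreeSystem S ∧ (∀ β, SysElem S β → SysElem T β) ∧
      (SysGoodFromFor n S σ P ∨ SysGoodFromFor n S σ Pᶜ) := by
  obtain ⟨S, hST, hS⟩ := exists_subsystem_sysGoodFromFor_or_compl x hgood P
  refine ⟨S, fun k κ ρ hρ ρ' hρ' => hT k κ ρ (hST k κ hρ) ρ' (hST k κ hρ'), ?_, hS⟩
  exact fun β hβ k => hST k _ (hβ k)

/-- Given a system `T⃗` that is `(2n_0−1, …, 2n_x−1)`-good from `σ⃗` and a set `P`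
of elements of `T⃗`, there is a system all of whose elements are elements of `T⃗`
which is `n⃗`-good from `σ⃗` for `P`, or one which is `n⃗`-good from `σ⃗` for the
complement of `P`. -/
theorem sys_good_subset_or_complement (x : ℕ) (n : Fin (x + 1) → ℕ)
    (hn : ∀ i, 1 ≤ n i)
    (T : TreeSystem x) (hT : IsTreeSystem T) (σ : Fin (x + 1) → List ℕ)
    (hgood : SysGoodFrom (fun i => 2 * n i - 1) T σ)
    (P : Set (Fin (x + 1) → List ℕ)) (hP : ∀ β ∈ P, SysElem T β) :
    ∃ S : TreeSystem x, IsTreeSystem S ∧ (∀ β, SysElem S β → SysElem T β) ∧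
      (SysGoodFromFor n S σ P ∨ SysGoodFromFor n S σ Pᶜ) :=
  sys_good_subset_or_complement_general x n T hT σ hgood P
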